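/- Fix ε ∈ (0,1] and set λ_t = ε·t^{-3/4} for t ≥ 1. Given a sequence (j_t)_{t≥1} with j_t ∈ {0,1}, define sequences (x_t)_{t≥1} and (α_t)_{t≥1} recursively by: α_t = ∏_{s=1}^{t-1}(1 − x_s) (so α_1 = 1); R¹_{t-1} = max(0, ∑_{s=1}^{t-1} α_s x_s (1 − 2j_s)) and R²_{t-1} = max(0, ∑_{s=1}^{t-1} α_s (λ_s^{-1} x_s − 1)(1 − 2j_s)); and x_t = 0 if (R¹_{t-1}, R²_{t-1}) = (0,0), and x_t = λ_t²·R²_{t-1} / (R¹_{t-1} + λ_t·R²_{t-1}) otherwise. Then for every T ≥ 1: (1/T)·∑_{t=1}^T α_t (λ_t^{-1} x_t − 1)(1 − 2j_t) ≤ 3ε/(T·λ_T); in particular this is at most 3ε² whenever T ≥ ε^{-8}. -/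

import Mathlib

open Finset

/-!
Blackwell's approachability argument for the nonnegative orthant of `ℝ²`, run in the
time-dependent inner product `⟨u, v⟩_(t) = u¹v¹ + λ_t² u²v²`. The step `x_t` is chosen so that
the payoff vector `g_t` of round `t` is `⟨·,·⟩_(t)`-orthogonal to `R_{t-1} = (R¹_{t-1}, R²_{t-1})`.
Taking positive parts does not increase `|·|` coordinatewise and `λ_t` decreases, so the potential
`Φ_t = ‖R_t‖²_(t)` satisfies `Φ_t ≤ Φ_{t-1} + ‖g_t‖²_(t) ≤ Φ_{t-1} + λ_t²`. Hence
`λ_T² (R²_T)² ≤ ∑ λ_t² = ε² ∑ t^(-3/2) ≤ 3ε²`, and the averaged sum is at most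
`R²_T / T ≤ 3ε / (T λ_T)`.
-/

lemma inv_mul_sqrt_succ_le {n : ℝ} (hn : 0 < n) :
    ((n + 1) * √(n + 1))⁻¹ ≤ 2 * ((√n)⁻¹ - (√(n + 1))⁻¹) := by
  set a := √n
  set b := √(n + 1)
  have ha : 0 < a := Real.sqrt_pos.2 hn
  have hab : a < b := Real.sqrt_lt_sqrt hn.le (by linarith)
  have hb : n + 1 = b ^ 2 := (Real.sq_sqrt (by linarith)).symm
  have hsq : b ^ 2 = a ^ 2 + 1 := by rw [← hb, Real.sq_sqrt hn.le]
  have hb0 : 0 < b := ha.trans hab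
  -- `b - a = 1 / (a + b)`, so the claim reduces to `a * (a + b) ≤ 2 * b ^ 2`
  have key : 0 ≤ 2 * b ^ 2 * (b - a) - a := by nlinarith
  have : 2 * (a⁻¹ - b⁻¹) - (b ^ 2 * b)⁻¹ = (2 * b ^ 2 * (b - a) - a) / (a * b ^ 3) := by
    field_simp
  rw [hb, ← sub_nonneg, this]
  positivity

lemma sum_Icc_inv_mul_sqrt_le {T : ℕ} (hT : 1 ≤ T) :
    ∑ s ∈ Icc 1 T, ((s : ℝ) * √s)⁻¹ ≤ 3 - 2 * (√T)⁻¹ := by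
  induction T, hT using Nat.le_induction with
  | base => norm_num
  | succ T hT ih =>
    rw [sum_Icc_succ_top (by omega), Nat.cast_succ]
    linarith [inv_mul_sqrt_succ_le (n := (T : ℝ)) (by exact_mod_cast hT)]

lemma rpow_neg_three_halves {y : ℝ} (hy : 0 ≤ y) : y ^ (-(3 : ℝ) / 2) = (y * √y)⁻¹ := by
  rw [show -(3 : ℝ) / 2 = -(1 + 1 / 2) by norm_num, Real.rpow_neg hy,
    Real.rpow_add' hy (by norm_num), Real.rpow_one, Real.sqrt_eq_rpow]

lemma sum_Icc_rpow_neg_three_halves_le (T : ℕ) : ∑ s ∈ Icc 1 T, (s : ℝ) ^ (-(3 : ℝ) / 2) ≤ 3 := by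
  rcases Nat.eq_zero_or_pos T with rfl | hT
  · norm_num
  rw [sum_congr rfl fun s _ => rpow_neg_three_halves s.cast_nonneg]
  have := sum_Icc_inv_mul_sqrt_le hT
  have : 0 ≤ (√(T : ℝ))⁻¹ := by positivity
  linarith

lemma sq_max_zero_le_sq {a b : ℝ} (h : a ≤ b) : max 0 a ^ 2 ≤ b ^ 2 := by
  rw [← sq_abs b]
  exact pow_le_pow_left₀ (le_max_left _ _) (max_le (abs_nonneg b) (h.trans (le_abs_self b))) 2

lemma sq_max_zero_sum_Icc_succ_le (g : ℕ → ℝ) (t : ℕ) :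
    max 0 (∑ s ∈ Icc 1 (t + 1), g s) ^ 2 ≤ (max 0 (∑ s ∈ Icc 1 t, g s) + g (t + 1)) ^ 2 := by
  rw [sum_Icc_succ_top (by omega)]
  exact sq_max_zero_le_sq (by linarith [le_max_right 0 (∑ s ∈ Icc 1 t, g s)])

theorem sq_add_mul_sq_le_sum_of_blackwell {g₁ g₂ w c R₁ R₂ : ℕ → ℝ}
    (hR₁ : ∀ t, R₁ t = max 0 (∑ s ∈ Icc 1 t, g₁ s))
    (hR₂ : ∀ t, R₂ t = max 0 (∑ s ∈ Icc 1 t, g₂ s))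
    (hw_nonneg : ∀ t, 0 ≤ w t) (hw_anti : ∀ t, 1 ≤ t → w (t + 1) ≤ w t)
    (hblackwell : ∀ t, R₁ t * g₁ (t + 1) + w (t + 1) * R₂ t * g₂ (t + 1) ≤ 0)
    (hg : ∀ t, 1 ≤ t → g₁ t ^ 2 + w t * g₂ t ^ 2 ≤ c t) (t : ℕ) :
    R₁ t ^ 2 + w t * R₂ t ^ 2 ≤ ∑ s ∈ Icc 1 t, c s := by
  induction t with
  | zero => simp [hR₁, hR₂]
  | succ t ih =>
    have step : ∀ {g R : ℕ → ℝ}, (∀ t, R t = max 0 (∑ s ∈ Icc 1 t, g s)) →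
        R (t + 1) ^ 2 ≤ (R t + g (t + 1)) ^ 2 := fun hR => by
      rw [hR, hR]
      exact sq_max_zero_sum_Icc_succ_le _ t
    have hR₂_shift : w (t + 1) * R₂ t ^ 2 ≤ w t * R₂ t ^ 2 := by
      rcases Nat.eq_zero_or_pos t with rfl | ht
      · simp [hR₂]
      · exact mul_le_mul_of_nonneg_right (hw_anti t ht) (sq_nonneg _)
    rw [sum_Icc_succ_top (by omega)]
    nlinarith [step hR₁, step hR₂, hw_nonneg (t + 1), hblackwell t, hg (t + 1) (by omega)]

noncomputable def blackwellStep (r₁ r₂ l : ℝ) : ℝ :=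
  if r₁ = 0 ∧ r₂ = 0 then 0 else l ^ 2 * r₂ / (r₁ + l * r₂)

section blackwellStep

variable {r₁ r₂ l : ℝ}

lemma add_mul_pos_of_not_both_zero (hr₁ : 0 ≤ r₁) (hr₂ : 0 ≤ r₂) (hl : 0 < l)
    (h : ¬(r₁ = 0 ∧ r₂ = 0)) : 0 < r₁ + l * r₂ := by
  rcases not_and_or.mp h with h | h
  · have := lt_of_le_of_ne hr₁ (Ne.symm h); positivity
  · have := lt_of_le_of_ne hr₂ (Ne.symm h); positivity

lemma blackwellStep_mem_Icc (hr₁ : 0 ≤ r₁) (hr₂ : 0 ≤ r₂) (hl : 0 < l) :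
    blackwellStep r₁ r₂ l ∈ Set.Icc 0 l := by
  unfold blackwellStep
  split_ifs with h
  · exact ⟨le_rfl, hl.le⟩
  · have hden := add_mul_pos_of_not_both_zero hr₁ hr₂ hl h
    refine ⟨by positivity, ?_⟩
    rw [div_le_iff₀ hden]
    nlinarith [mul_nonneg hl.le hr₁]

lemma blackwellStep_orthogonal (hr₁ : 0 ≤ r₁) (hr₂ : 0 ≤ r₂) (hl : 0 < l) :
    r₁ * blackwellStep r₁ r₂ l + l ^ 2 * r₂ * (l⁻¹ * blackwellStep r₁ r₂ l - 1) = 0 := by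
  unfold blackwellStep
  split_ifs with h
  · simp [h.1, h.2]
  · have hden := (add_mul_pos_of_not_both_zero hr₁ hr₂ hl h).ne'
    field_simp
    ring

end blackwellStep

lemma prod_one_sub_mem_Icc {ι : Type*} {s : Finset ι} {f : ι → ℝ}
    (hf : ∀ i ∈ s, f i ∈ Set.Icc 0 1) : ∏ i ∈ s, (1 - f i) ∈ Set.Icc 0 1 :=
  ⟨prod_nonneg fun i hi => by linarith [(hf i hi).2],
    prod_le_one (fun i hi => by linarith [(hf i hi).2]) fun i hi => by linarith [(hf i hi).1]⟩

lemma sq_add_sq_mul_inv_mul_sub_one_le {a x l d : ℝ} (ha : a ∈ Set.Icc 0 1) (hx : x ∈ Set.Icc 0 l)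
    (hl : 0 < l) (hd : d ^ 2 ≤ 1) :
    (a * x * d) ^ 2 + l ^ 2 * (a * (l⁻¹ * x - 1) * d) ^ 2 ≤ l ^ 2 := by
  have hsplit : (a * x * d) ^ 2 + l ^ 2 * (a * (l⁻¹ * x - 1) * d) ^ 2
      = (a ^ 2 * d ^ 2) * (x ^ 2 + (l - x) ^ 2) := by
    field_simp
    ring
  have had : a ^ 2 * d ^ 2 ≤ 1 := by
    nlinarith [pow_le_one₀ ha.1 ha.2 (n := 2), sq_nonneg a, sq_nonneg d]
  have hxl : x ^ 2 + (l - x) ^ 2 ≤ l ^ 2 := by nlinarith [mul_nonneg hx.1 (sub_nonneg.2 hx.2)]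
  rw [hsplit]
  calc a ^ 2 * d ^ 2 * (x ^ 2 + (l - x) ^ 2) ≤ 1 * l ^ 2 :=
        mul_le_mul had hxl (by positivity) zero_le_one
    _ = l ^ 2 := one_mul _

noncomputable def bigMatchWeight (ε : ℝ) (t : ℕ) : ℝ := ε * (t : ℝ) ^ (-(3 : ℝ) / 4)

section bigMatchWeight

variable {ε : ℝ} {s t : ℕ}

lemma bigMatchWeight_pos (hε : 0 < ε) (ht : 1 ≤ t) : 0 < bigMatchWeight ε t := by
  have : (0 : ℝ) < t := by exact_mod_cast ht
  unfold bigMatchWeight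
  positivity

lemma bigMatchWeight_le (hε : 0 ≤ ε) (ht : 1 ≤ t) : bigMatchWeight ε t ≤ ε :=
  mul_le_of_le_one_right hε <|
    Real.rpow_le_one_of_one_le_of_nonpos (by exact_mod_cast ht) (by norm_num)

lemma bigMatchWeight_antitone (hε : 0 ≤ ε) (hs : 1 ≤ s) (hst : s ≤ t) :
    bigMatchWeight ε t ≤ bigMatchWeight ε s :=
  mul_le_mul_of_nonneg_left
    (Real.rpow_le_rpow_of_nonpos (by exact_mod_cast hs) (by exact_mod_cast hst) (by norm_num)) hε

lemma sq_bigMatchWeight (ε : ℝ) (t : ℕ) :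
    bigMatchWeight ε t ^ 2 = ε ^ 2 * (t : ℝ) ^ (-(3 : ℝ) / 2) := by
  rw [bigMatchWeight, mul_pow, ← Real.rpow_natCast ((t : ℝ) ^ (-(3 : ℝ) / 4)) 2,
    ← Real.rpow_mul t.cast_nonneg]
  norm_num

lemma sum_sq_bigMatchWeight_le (ε : ℝ) (T : ℕ) :
    ∑ t ∈ Icc 1 T, bigMatchWeight ε t ^ 2 ≤ 3 * ε ^ 2 := by
  simp_rw [sq_bigMatchWeight, ← mul_sum]
  nlinarith [sum_Icc_rpow_neg_three_halves_le T, sq_nonneg ε]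

lemma inv_le_natCast_mul_bigMatchWeight (hε : 0 < ε) (ht : ε ^ (-8 : ℤ) ≤ t) :
    ε⁻¹ ≤ t * bigMatchWeight ε t := by
  have ht₀ : (0 : ℝ) < t := (zpow_pos hε _).trans_le ht
  rw [zpow_neg, inv_le_iff_one_le_mul₀' (by positivity)] at ht
  have hquarter : (t : ℝ) * bigMatchWeight ε t = ε * (t : ℝ) ^ (4⁻¹ : ℝ) := by
    rw [bigMatchWeight, show (4⁻¹ : ℝ) = 1 + -(3 : ℝ) / 4 by norm_num, Real.rpow_add ht₀,
      Real.rpow_one]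
    ring
  have hfourth : (ε ^ 2 * (t : ℝ) ^ (4⁻¹ : ℝ)) ^ 4 = ε ^ 8 * t := by
    rw [mul_pow, ← Real.rpow_natCast ((t : ℝ) ^ (4⁻¹ : ℝ)), ← Real.rpow_mul ht₀.le,
      show (4⁻¹ : ℝ) * (4 : ℕ) = 1 by norm_num, Real.rpow_one]
    ring
  have h1 : 1 ≤ ε ^ 2 * (t : ℝ) ^ (4⁻¹ : ℝ) :=
    (one_le_pow_iff_of_nonneg (by positivity) (by norm_num)).1 (hfourth ▸ ht)
  rw [hquarter, inv_le_iff_one_le_mul₀' hε]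
  linarith

lemma div_natCast_mul_bigMatchWeight_le_sq (hε : 0 < ε) (ht : ε ^ (-8 : ℤ) ≤ t) :
    ε / (t * bigMatchWeight ε t) ≤ ε ^ 2 := by
  have ht₀ : 0 < t := by exact_mod_cast (zpow_pos hε _).trans_le ht
  rw [div_le_iff₀ (mul_pos (by exact_mod_cast ht₀) (bigMatchWeight_pos hε ht₀))]
  calc ε = ε ^ 2 * ε⁻¹ := by field_simp
    _ ≤ ε ^ 2 * (t * bigMatchWeight ε t) := by
      gcongr
      exact inv_le_natCast_mul_bigMatchWeight hε ht

end bigMatchWeight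

theorem bigMatch_sq_add_sq_mul_sq_le_sum_sq {lam j x α R1 R2 : ℕ → ℝ}
    (hlam_pos : ∀ t, 1 ≤ t → 0 < lam t) (hlam_le_one : ∀ t, 1 ≤ t → lam t ≤ 1)
    (hlam_anti : ∀ t, 1 ≤ t → lam (t + 1) ≤ lam t) (hj : ∀ t, j t = 0 ∨ j t = 1)
    (hα : ∀ t, α t = ∏ s ∈ Icc 1 (t - 1), (1 - x s))
    (hR1 : ∀ t, R1 t = max 0 (∑ s ∈ Icc 1 t, α s * x s * (1 - 2 * j s)))
    (hR2 : ∀ t, R2 t = max 0 (∑ s ∈ Icc 1 t, α s * ((lam s)⁻¹ * x s - 1) * (1 - 2 * j s)))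
    (hx : ∀ t, 1 ≤ t → x t = blackwellStep (R1 (t - 1)) (R2 (t - 1)) (lam t)) (T : ℕ) :
    R1 T ^ 2 + lam T ^ 2 * R2 T ^ 2 ≤ ∑ t ∈ Icc 1 T, lam t ^ 2 := by
  have hR_nonneg : ∀ t, 0 ≤ R1 t ∧ 0 ≤ R2 t := fun t =>
    ⟨hR1 t ▸ le_max_left _ _, hR2 t ▸ le_max_left _ _⟩
  have hx_mem : ∀ t, 1 ≤ t → x t ∈ Set.Icc 0 (lam t) := fun t ht =>
    hx t ht ▸ blackwellStep_mem_Icc (hR_nonneg _).1 (hR_nonneg _).2 (hlam_pos t ht)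
  have hα_mem : ∀ t, α t ∈ Set.Icc 0 1 := fun t => hα t ▸ prod_one_sub_mem_Icc fun s hs =>
    have hs : 1 ≤ s := (mem_Icc.1 hs).1
    ⟨(hx_mem s hs).1, (hx_mem s hs).2.trans (hlam_le_one s hs)⟩
  have hd : ∀ t, (1 - 2 * j t) ^ 2 ≤ 1 := fun t => by rcases hj t with h | h <;> norm_num [h]
  refine sq_add_mul_sq_le_sum_of_blackwell (w := fun t => lam t ^ 2) (c := fun t => lam t ^ 2)
    hR1 hR2 (fun t => sq_nonneg _)
    (fun t ht => pow_le_pow_left₀ (hlam_pos (t + 1) (by omega)).le (hlam_anti t ht) 2)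
    (fun t => ?_)
    (fun t ht => sq_add_sq_mul_inv_mul_sub_one_le (hα_mem t) (hx_mem t ht) (hlam_pos t ht) (hd t)) T
  have horth :=
    blackwellStep_orthogonal (hR_nonneg t).1 (hR_nonneg t).2 (hlam_pos (t + 1) (by omega))
  rw [hx (t + 1) (by omega), Nat.add_sub_cancel]
  exact (by linear_combination α (t + 1) * (1 - 2 * j (t + 1)) * horth : _ = (0 : ℝ)).le

/-- Second-component guarantee of Blackwell's algorithm in the auxiliary approachability problem of the Big Match: `(1/T) ∑_{t=1}^T α_t (λ_t⁻¹ x_t − 1)(1 − 2j_t) ≤ 3ε/(T λ_T)`, which is at most `3ε²` whenever `T ≥ ε⁻⁸`. -/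
theorem big_match_second_component_bound
    (ε : ℝ) (hε : ε ∈ Set.Ioc (0 : ℝ) 1)
    (lam : ℕ → ℝ) (hlam : ∀ t : ℕ, 1 ≤ t → lam t = ε * (t : ℝ) ^ (-(3 : ℝ) / 4))
    (j : ℕ → ℝ) (hj : ∀ t, j t = 0 ∨ j t = 1)
    (x α : ℕ → ℝ)
    (hα : ∀ t, α t = ∏ s ∈ Finset.Icc 1 (t - 1), (1 - x s))
    (R1 R2 : ℕ → ℝ)
    (hR1 : ∀ t, R1 t = max 0 (∑ s ∈ Finset.Icc 1 t, α s * x s * (1 - 2 * j s)))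
    (hR2 : ∀ t, R2 t =
      max 0 (∑ s ∈ Finset.Icc 1 t, α s * ((lam s)⁻¹ * x s - 1) * (1 - 2 * j s)))
    (hx : ∀ t : ℕ, 1 ≤ t →
      x t = if R1 (t - 1) = 0 ∧ R2 (t - 1) = 0 then 0
        else lam t ^ 2 * R2 (t - 1) / (R1 (t - 1) + lam t * R2 (t - 1))) :
    ∀ T : ℕ, 1 ≤ T →
      (T : ℝ)⁻¹ * (∑ t ∈ Finset.Icc 1 T,
          α t * ((lam t)⁻¹ * x t - 1) * (1 - 2 * j t)) ≤
        3 * ε / ((T : ℝ) * lam T) ∧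
      (ε ^ (-8 : ℤ) ≤ (T : ℝ) →
        (T : ℝ)⁻¹ * (∑ t ∈ Finset.Icc 1 T,
            α t * ((lam t)⁻¹ * x t - 1) * (1 - 2 * j t)) ≤ 3 * ε ^ 2) := by
  obtain ⟨hε₀, hε₁⟩ := hε
  have hlam' : ∀ t, 1 ≤ t → lam t = bigMatchWeight ε t := hlam
  have hlam_pos : ∀ t, 1 ≤ t → 0 < lam t := fun t ht => hlam' t ht ▸ bigMatchWeight_pos hε₀ ht
  have hpotential := bigMatch_sq_add_sq_mul_sq_le_sum_sq hlam_pos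
    (fun t ht => hlam' t ht ▸ (bigMatchWeight_le hε₀.le ht).trans hε₁)
    (fun t ht => by
      rw [hlam' t ht, hlam' (t + 1) (by omega)]
      exact bigMatchWeight_antitone hε₀.le ht (by omega))
    hj hα hR1 hR2 hx
  intro T hT
  have hsum : ∑ t ∈ Icc 1 T, lam t ^ 2 ≤ 3 * ε ^ 2 := by
    rw [sum_congr rfl fun t ht => by rw [hlam' t (mem_Icc.1 ht).1]]
    exact sum_sq_bigMatchWeight_le ε T
  have hR2T : lam T * R2 T ≤ 3 * ε := by
    refine (pow_le_pow_iff_left₀ (mul_nonneg (hlam_pos T hT).le (hR2 T ▸ le_max_left _ _))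
      (by positivity) two_ne_zero).1 ?_
    nlinarith [hpotential T, sq_nonneg (R1 T), sq_nonneg ε]
  have hfirst : (T : ℝ)⁻¹ * (∑ t ∈ Icc 1 T, α t * ((lam t)⁻¹ * x t - 1) * (1 - 2 * j t)) ≤
      3 * ε / ((T : ℝ) * lam T) := by
    calc _ ≤ (T : ℝ)⁻¹ * (3 * ε / lam T) := by
          gcongr
          exact (hR2 T ▸ le_max_right _ _).trans ((le_div_iff₀ (hlam_pos T hT)).2 (by linarith))
      _ = 3 * ε / ((T : ℝ) * lam T) := by field_simp
  refine ⟨hfirst, fun hTε => hfirst.trans ?_⟩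
  rw [hlam' T hT, mul_div_assoc]
  exact mul_le_mul_of_nonneg_left (div_natCast_mul_bigMatchWeight_le_sq hε₀ hTε) (by norm_num)
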